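/- Under the conditions 0 < r, s < 1 and s² ≤ r ≤ s, for every z ∈ Q_{s²,s}(x), the Euclidean ball { y : |y - z| < r } of volume ≍ r^N intersects Q_{r,s}(x) in a set of measure at least c·r^N, where c > 0 depends only on the structural constants; consequently avg_{z ∈ Q_{s²,s}(x)} avg_{|y-z|<r} |f(y)| dy ≥ c' (s^{N-1} r)^{-1} ∫_{Q'_{r,s}(x)} |f|, where Q'_{r,s} is a fixed fractional shrinking of Q_{r,s}. -/

import Mathlib

open scoped BigOperators ENNReal NNReal
open MeasureTheory

/-- Euclidean norm on `Fin m → ℝ`. -/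
noncomputable def euclN {m : ℕ} (x : Fin m → ℝ) : ℝ := Real.sqrt (∑ i, (x i) ^ 2)

/-- The rectangular cube `Q_{r,s}(x)` in the model case `L_x = identity`:
`Σ_{i<N} |x_i - y_i| ≤ s` and `|x_N - y_N| ≤ r`. -/
def Qcube (d : ℕ) (r s : ℝ) (x : Fin (d+1) → ℝ) : Set (Fin (d+1) → ℝ) :=
  {y | (∑ i : Fin d, |x i.castSucc - y i.castSucc|) ≤ s ∧
        |x (Fin.last d) - y (Fin.last d)| ≤ r}

/-- Euclidean ball of radius `r` about `z`. -/
def Ball (d : ℕ) (z : Fin (d+1) → ℝ) (r : ℝ) : Set (Fin (d+1) → ℝ) :=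
  {y | euclN (y - z) < r}

/-!
Everything is reduced to boxes `|y_i - c_i| ≤ a` (`i < N`), `|y_N - c_N| ≤ b`, of volume
`(2a)^{N-1} · 2b`. For `z ∈ Q_{s²,s}(x)`, the box of side `≍ r` centred at the point reached from
`z` by moving a fraction `≍ r/s` of the way to `x` horizontally and halfway vertically lies in
`B(z,r) ∩ Q_{r,s}(x)`. For the averages, Tonelli turns `∫_{Q_{s²,s}} ∫_{B(z,r)} f` into
`∫ f(y) |B(y,r) ∩ Q_{s²,s}(x)| dy`; for `y ∈ Q_{r/4,s/4}(x)` that slice contains a box of volume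
`≍ r^{N-1} s²`, while `|Q_{s²,s}| ≲ s^{N+1}` and `|B(z,r)| ≲ r^N`.
-/

open Finset

section Geometry

variable {d : ℕ}

lemma euclN_le_sum_abs {m : ℕ} (v : Fin m → ℝ) : euclN v ≤ ∑ i, |v i| := by
  refine (Real.sqrt_le_left (sum_nonneg fun i _ => abs_nonneg (v i))).2 ?_
  simpa only [sq_abs] using sum_sq_le_sq_sum_of_nonneg fun i _ => abs_nonneg (v i)

lemma abs_le_euclN {m : ℕ} (v : Fin m → ℝ) (i : Fin m) : |v i| ≤ euclN v := by
  rw [← Real.sqrt_sq_eq_abs]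
  exact Real.sqrt_le_sqrt (single_le_sum (f := fun j => v j ^ 2) (fun j _ => sq_nonneg _)
    (mem_univ i))

lemma euclN_sub_comm {m : ℕ} (x y : Fin m → ℝ) : euclN (x - y) = euclN (y - x) := by
  unfold euclN
  congr 1
  exact sum_congr rfl fun i _ => by simp only [Pi.sub_apply]; ring

lemma continuous_euclN {m : ℕ} : Continuous (euclN : (Fin m → ℝ) → ℝ) := by
  unfold euclN; fun_prop

def horizDist (x y : Fin (d+1) → ℝ) : ℝ := ∑ i : Fin d, |x i.castSucc - y i.castSucc|

lemma horizDist_comm (x y : Fin (d+1) → ℝ) : horizDist x y = horizDist y x := by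
  simp only [horizDist, abs_sub_comm]

lemma horizDist_triangle (x y z : Fin (d+1) → ℝ) :
    horizDist x z ≤ horizDist x y + horizDist y z := by
  rw [horizDist, horizDist, horizDist, ← sum_add_distrib]
  exact sum_le_sum fun i _ => abs_sub_le _ _ _

lemma euclN_sub_le (y z : Fin (d+1) → ℝ) :
    euclN (y - z) ≤ horizDist y z + |y (Fin.last d) - z (Fin.last d)| := by
  simpa only [horizDist, Fin.sum_univ_castSucc, Pi.sub_apply] using euclN_le_sum_abs (y - z)

lemma mem_Qcube_iff {r s : ℝ} {x y : Fin (d+1) → ℝ} :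
    y ∈ Qcube d r s x ↔ horizDist x y ≤ s ∧ |x (Fin.last d) - y (Fin.last d)| ≤ r :=
  Iff.rfl

lemma measurableSet_Qcube (r s : ℝ) (x : Fin (d+1) → ℝ) : MeasurableSet (Qcube d r s x) := by
  unfold Qcube; measurability

def Box (d : ℕ) (c : Fin (d+1) → ℝ) (a b : ℝ) : Set (Fin (d+1) → ℝ) :=
  {y | (∀ i : Fin d, |y i.castSucc - c i.castSucc| ≤ a) ∧ |y (Fin.last d) - c (Fin.last d)| ≤ b}

lemma volume_Box (c : Fin (d+1) → ℝ) {a b : ℝ} (ha : 0 ≤ a) :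
    volume (Box d c a b) = ENNReal.ofReal ((2 * a) ^ d * (2 * b)) := by
  set w : Fin (d+1) → ℝ := Fin.lastCases b fun _ => a
  have hBox : Box d c a b = Set.univ.pi fun i => Set.Icc (c i - w i) (c i + w i) := by
    ext y
    simp only [Box, Set.mem_ofPred_eq, Set.mem_univ_pi, Fin.forall_fin_succ' (n := d), w,
      Fin.lastCases_castSucc, Fin.lastCases_last, abs_le, Set.mem_Icc, sub_le_iff_le_add,
      le_sub_iff_add_le]
    grind
  have hlength (t u : ℝ) : t + u - (t - u) = 2 * u := by ring
  rw [hBox, volume_pi_pi, Fin.prod_univ_castSucc]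
  simp only [Real.volume_Icc, hlength, w, Fin.lastCases_castSucc, Fin.lastCases_last]
  rw [prod_const, card_univ, Fintype.card_fin, ← ENNReal.ofReal_pow (by linarith),
    ← ENNReal.ofReal_mul (by positivity)]

lemma horizDist_le_of_mem_Box {c y : Fin (d+1) → ℝ} {a b : ℝ} (hy : y ∈ Box d c a b) :
    horizDist c y ≤ d * a := by
  simpa [horizDist, abs_sub_comm] using sum_le_card_nsmul univ _ a fun i _ => hy.1 i

lemma Box_subset_Qcube {x c : Fin (d+1) → ℝ} {a b r s : ℝ} (hs : horizDist x c + d * a ≤ s)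
    (hr : |x (Fin.last d) - c (Fin.last d)| + b ≤ r) : Box d c a b ⊆ Qcube d r s x := by
  intro y hy
  refine mem_Qcube_iff.2 ⟨?_, ?_⟩
  · linarith [horizDist_triangle x c y, horizDist_le_of_mem_Box hy]
  · have hlast : |c (Fin.last d) - y (Fin.last d)| ≤ b := by rw [abs_sub_comm]; exact hy.2
    linarith [abs_sub_le (x (Fin.last d)) (c (Fin.last d)) (y (Fin.last d))]

lemma Box_subset_Ball {z c : Fin (d+1) → ℝ} {a b r : ℝ}
    (h : horizDist z c + d * a + (|z (Fin.last d) - c (Fin.last d)| + b) < r) :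
    Box d c a b ⊆ Ball d z r := by
  intro y hy
  have hlast : |c (Fin.last d) - y (Fin.last d)| ≤ b := by rw [abs_sub_comm]; exact hy.2
  have := euclN_sub_le y z
  rw [horizDist_comm, abs_sub_comm] at this
  show euclN (y - z) < r
  linarith [horizDist_triangle z c y, horizDist_le_of_mem_Box hy,
    abs_sub_le (z (Fin.last d)) (c (Fin.last d)) (y (Fin.last d))]

lemma Ball_subset_Box (z : Fin (d+1) → ℝ) (r : ℝ) : Ball d z r ⊆ Box d z r r :=
  fun y hy => ⟨fun _ => (abs_le_euclN (y - z) _).trans hy.le,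
    (abs_le_euclN (y - z) _).trans hy.le⟩

lemma Qcube_subset_Box (x : Fin (d+1) → ℝ) (r s : ℝ) : Qcube d r s x ⊆ Box d x s r :=
  fun y hy => ⟨fun i => by
    rw [abs_sub_comm]
    exact (single_le_sum (f := fun j : Fin d => |x j.castSucc - y j.castSucc|)
      (fun j _ => abs_nonneg _) (mem_univ i)).trans hy.1,
    by rw [abs_sub_comm]; exact hy.2⟩

end Geometry

section Estimates

variable {d : ℕ} {r s : ℝ}

lemma volume_Ball_inter_Qcube_ge (hr : 0 < r) (hsr : s ^ 2 ≤ r) (hrs : r ≤ s)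
    {x z : Fin (d+1) → ℝ} (hz : z ∈ Qcube d (s ^ 2) s x) :
    ENNReal.ofReal ((r / (8 * (d + 1))) ^ (d + 1)) ≤ volume (Ball d z r ∩ Qcube d r s x) := by
  obtain ⟨hzh, hzl⟩ := mem_Qcube_iff.1 hz
  have hs : 0 < s := hr.trans_le hrs
  set η := r / (8 * s) with hη
  set δ := r / (16 * (d + 1)) with hδ
  have hη0 : 0 ≤ η := by positivity
  have hηs : η * s = r / 8 := by rw [hη]; field_simp
  have hη1 : η ≤ 1 := by nlinarith
  have hδ0 : 0 < δ := by positivity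
  have h2δ : 2 * δ = r / (8 * (d + 1)) := by rw [hδ]; field_simp; ring
  have hdδ : (d + 1) * δ = r / 16 := by rw [hδ]; field_simp
  set w : Fin (d+1) → ℝ := Fin.lastCases ((x (Fin.last d) + z (Fin.last d)) / 2)
    fun i => z i.castSucc + η * (x i.castSucc - z i.castSucc)
  have hxw : horizDist x w = (1 - η) * horizDist x z := by
    simp only [horizDist, w, Fin.lastCases_castSucc, mul_sum]
    refine sum_congr rfl fun i _ => ?_
    rw [show x i.castSucc - (z i.castSucc + η * (x i.castSucc - z i.castSucc)) =
      (1 - η) * (x i.castSucc - z i.castSucc) by ring, abs_mul, abs_of_nonneg (sub_nonneg.2 hη1)]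
  have hzw : horizDist z w = η * horizDist x z := by
    simp only [horizDist, w, Fin.lastCases_castSucc, mul_sum]
    refine sum_congr rfl fun i _ => ?_
    rw [show z i.castSucc - (z i.castSucc + η * (x i.castSucc - z i.castSucc)) =
      -(η * (x i.castSucc - z i.castSucc)) by ring, abs_neg, abs_mul, abs_of_nonneg hη0]
  have hxw_last : |x (Fin.last d) - w (Fin.last d)| = |x (Fin.last d) - z (Fin.last d)| / 2 := by
    simp only [w, Fin.lastCases_last]
    rw [← abs_two, ← abs_div]
    ring_nf
  have hzw_last : |z (Fin.last d) - w (Fin.last d)| = |x (Fin.last d) - z (Fin.last d)| / 2 := by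
    simp only [w, Fin.lastCases_last]
    rw [← abs_two, ← abs_div, ← abs_neg]
    ring_nf
  have hηh : η * horizDist x z ≤ r / 8 := hηs ▸ mul_le_mul_of_nonneg_left hzh hη0
  have hBall : Box d w δ δ ⊆ Ball d z r := Box_subset_Ball (by rw [hzw, hzw_last]; nlinarith)
  have hQcube : Box d w δ δ ⊆ Qcube d r s x :=
    Box_subset_Qcube (by rw [hxw]; nlinarith) (by rw [hxw_last]; nlinarith)
  calc ENNReal.ofReal ((r / (8 * (d + 1))) ^ (d + 1)) = volume (Box d w δ δ) := by
        rw [volume_Box _ hδ0.le, h2δ, pow_succ]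
    _ ≤ volume (Ball d z r ∩ Qcube d r s x) := measure_mono (Set.subset_inter hBall hQcube)

lemma volume_Ball_inter_Qcube_sq_ge (hr : 0 < r) (hsr : s ^ 2 ≤ r) (hrs : r ≤ s)
    {x y : Fin (d+1) → ℝ} (hy : y ∈ Qcube d (r / 4) (s / 4) x) :
    ENNReal.ofReal ((r / (2 * (d + 1))) ^ d * (s ^ 2 / 2)) ≤
      volume (Ball d y r ∩ Qcube d (s ^ 2) s x) := by
  obtain ⟨hyh, hyl⟩ := mem_Qcube_iff.1 hy
  set ρ := r / (4 * (d + 1)) with hρ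
  have hρ0 : 0 < ρ := by positivity
  have h2ρ : 2 * ρ = r / (2 * (d + 1)) := by rw [hρ]; field_simp; ring
  have hdρ : (d + 1) * ρ = r / 4 := by rw [hρ]; field_simp
  set c : Fin (d+1) → ℝ := Fin.lastCases (x (Fin.last d)) fun i => y i.castSucc
  have hyc : horizDist y c = 0 := by simp [horizDist, c]
  have hxc : horizDist x c = horizDist x y := by simp [horizDist, c]
  have hBall : Box d c ρ (s ^ 2 / 4) ⊆ Ball d y r := by
    refine Box_subset_Ball ?_
    rw [hyc, abs_sub_comm]
    simp only [c, Fin.lastCases_last]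
    nlinarith
  have hQcube : Box d c ρ (s ^ 2 / 4) ⊆ Qcube d (s ^ 2) s x := by
    refine Box_subset_Qcube (by rw [hxc]; nlinarith) ?_
    simp only [c, Fin.lastCases_last, sub_self, abs_zero]
    linarith [sq_nonneg s]
  calc ENNReal.ofReal ((r / (2 * (d + 1))) ^ d * (s ^ 2 / 2))
        = volume (Box d c ρ (s ^ 2 / 4)) := by
        rw [volume_Box _ hρ0.le, h2ρ]
        ring_nf
    _ ≤ volume (Ball d y r ∩ Qcube d (s ^ 2) s x) := measure_mono (Set.subset_inter hBall hQcube)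

end Estimates

section Averaging

variable {α : Type*} [MeasurableSpace α] {μ : Measure α} [SFinite μ] {R : Set (α × α)}
  {f : α → ℝ≥0∞}

theorem setLIntegral_setLIntegral_preimage_eq (hR : MeasurableSet R) (hf : Measurable f)
    (Q : Set α) :
    ∫⁻ z in Q, ∫⁻ y in Prod.mk z ⁻¹' R, f y ∂μ ∂μ = ∫⁻ y, f y * μ ((·, y) ⁻¹' R ∩ Q) ∂μ := by
  calc ∫⁻ z in Q, ∫⁻ y in Prod.mk z ⁻¹' R, f y ∂μ ∂μ
      = ∫⁻ z in Q, ∫⁻ y, R.indicator (fun p => f p.2) (z, y) ∂μ ∂μ := by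
        refine lintegral_congr fun z => ?_
        rw [← lintegral_indicator (measurable_prodMk_left hR)]
        exact lintegral_congr fun y =>
          Set.indicator_comp_right (g := fun p : α × α => f p.2) (Prod.mk z)
    _ = ∫⁻ y, ∫⁻ z in Q, R.indicator (fun p => f p.2) (z, y) ∂μ ∂μ :=
        lintegral_lintegral_swap ((hf.comp measurable_snd).indicator hR).aemeasurable
    _ = ∫⁻ y, f y * μ ((·, y) ⁻¹' R ∩ Q) ∂μ := by
        refine lintegral_congr fun y => ?_
        have hR_y : MeasurableSet ((·, y) ⁻¹' R) := measurable_prodMk_right hR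
        rw [← Measure.restrict_apply hR_y, ← lintegral_indicator_one hR_y,
          ← lintegral_const_mul _ (measurable_one.indicator hR_y)]
        refine lintegral_congr fun z => ?_
        by_cases hzy : (z, y) ∈ R <;> simp [Set.indicator, hzy]

theorem mul_setLIntegral_le_iterated_average (hR : MeasurableSet R) (hf : Measurable f)
    {Q Q' : Set α} (hQ' : MeasurableSet Q') {A K M : ℝ≥0∞} (hQ : μ Q ≤ A)
    (hK : ∀ z, μ (Prod.mk z ⁻¹' R) ≤ K) (hM : ∀ y ∈ Q', M ≤ μ ((·, y) ⁻¹' R ∩ Q)) :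
    A⁻¹ * K⁻¹ * M * ∫⁻ y in Q', f y ∂μ ≤
      (μ Q)⁻¹ * ∫⁻ z in Q, (μ (Prod.mk z ⁻¹' R))⁻¹ * ∫⁻ y in Prod.mk z ⁻¹' R, f y ∂μ ∂μ := by
  have hinner : M * ∫⁻ y in Q', f y ∂μ ≤ ∫⁻ z in Q, ∫⁻ y in Prod.mk z ⁻¹' R, f y ∂μ ∂μ := by
    rw [setLIntegral_setLIntegral_preimage_eq hR hf]
    calc M * ∫⁻ y in Q', f y ∂μ ≤ ∫⁻ y in Q', M * f y ∂μ := lintegral_const_mul_le _ _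
      _ ≤ ∫⁻ y in Q', f y * μ ((·, y) ⁻¹' R ∩ Q) ∂μ :=
          setLIntegral_mono' hQ' fun y hy => by rw [mul_comm]; gcongr; exact hM y hy
      _ ≤ ∫⁻ y, f y * μ ((·, y) ⁻¹' R ∩ Q) ∂μ := setLIntegral_le_lintegral _ _
  calc A⁻¹ * K⁻¹ * M * ∫⁻ y in Q', f y ∂μ = A⁻¹ * (K⁻¹ * (M * ∫⁻ y in Q', f y ∂μ)) := by
        simp only [mul_assoc]
    _ ≤ (μ Q)⁻¹ * (K⁻¹ * ∫⁻ z in Q, ∫⁻ y in Prod.mk z ⁻¹' R, f y ∂μ ∂μ) := by gcongr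
    _ ≤ (μ Q)⁻¹ * ∫⁻ z in Q, K⁻¹ * ∫⁻ y in Prod.mk z ⁻¹' R, f y ∂μ ∂μ := by
        gcongr; exact lintegral_const_mul_le _ _
    _ ≤ (μ Q)⁻¹ * ∫⁻ z in Q, (μ (Prod.mk z ⁻¹' R))⁻¹ * ∫⁻ y in Prod.mk z ⁻¹' R, f y ∂μ ∂μ := by
        gcongr with z; exact hK z

end Averaging

/-- for `0 < r,s < 1` with `s² ≤ r ≤ s` and `z ∈ Q_{s²,s}(x)`, the ball
`{|y-z|<r}` meets `Q_{r,s}(x)` in measure `≥ c·r^N`; consequently the double average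
dominates `c'(s^{N-1}r)^{-1} ∫_{Q'_{r,s}(x)} f` for a fixed fractional shrinking `Q'`. -/
theorem ball_meets_cube (d : ℕ) :
    ∃ c : ℝ, 0 < c ∧ ∃ c' : ℝ, 0 < c' ∧ ∃ θ : ℝ, 0 < θ ∧ θ < 1 ∧
      ∀ r s : ℝ, 0 < r → r < 1 → 0 < s → s < 1 → s ^ 2 ≤ r → r ≤ s →
        ∀ x : Fin (d+1) → ℝ,
        (∀ z ∈ Qcube d (s ^ 2) s x,
          ENNReal.ofReal (c * r ^ (d+1)) ≤ volume (Ball d z r ∩ Qcube d r s x)) ∧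
        (∀ f : (Fin (d+1) → ℝ) → ℝ≥0∞, Measurable f →
          ENNReal.ofReal (c' / (s ^ d * r)) * ∫⁻ y in Qcube d (θ * r) (θ * s) x, f y ≤
            (volume (Qcube d (s ^ 2) s x))⁻¹ *
              ∫⁻ z in Qcube d (s ^ 2) s x,
                (volume (Ball d z r))⁻¹ * ∫⁻ y in Ball d z r, f y) := by
  refine ⟨((8 * (d + 1)) ^ (d + 1))⁻¹, by positivity, (8 * (8 * (d + 1)) ^ d)⁻¹, by positivity,
    1 / 4, by norm_num, by norm_num,
    fun r s hr _ hs _ hsr hrs x => ⟨fun z hz => ?_, fun f hf => ?_⟩⟩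
  · rw [inv_mul_eq_div, ← div_pow]
    exact volume_Ball_inter_Qcube_ge hr hsr hrs hz
  · rw [one_div_mul_eq_div, one_div_mul_eq_div]
    set R := {p : (Fin (d+1) → ℝ) × (Fin (d+1) → ℝ) | euclN (p.2 - p.1) < r}
    have hR : MeasurableSet R :=
      (isOpen_lt (continuous_euclN.comp (continuous_snd.sub continuous_fst))
        continuous_const).measurableSet
    have hR_right (y : Fin (d+1) → ℝ) : (·, y) ⁻¹' R = Ball d y r := by
      ext z
      change euclN (y - z) < r ↔ euclN (z - y) < r
      rw [euclN_sub_comm]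
    refine le_trans ?_ (mul_setLIntegral_le_iterated_average hR hf (measurableSet_Qcube _ _ x)
      ((measure_mono (Qcube_subset_Box x _ _)).trans_eq (volume_Box x hs.le))
      (fun z => (measure_mono (Ball_subset_Box z r)).trans_eq (volume_Box z hr.le))
      (fun y hy => (hR_right y).symm ▸ volume_Ball_inter_Qcube_sq_ge hr hsr hrs hy))
    gcongr
    rw [← ENNReal.ofReal_inv_of_pos (by positivity), ← ENNReal.ofReal_inv_of_pos (by positivity),
      ← ENNReal.ofReal_mul (by positivity), ← ENNReal.ofReal_mul (by positivity)]
    refine ENNReal.ofReal_le_ofReal (le_of_eq ?_)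
    rw [show (8 : ℝ) = 2 ^ 3 by norm_num]
    simp only [mul_pow, div_pow, ← pow_mul]
    field_simp
    ring
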